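/- Let G be a group and 𝓕 the forest monoid with a Zappa–Szép action pair (g,E) ↦ g·E, (g,E) ↦ g^E such that for each k ≥ 1 the cloning map κ_k : G → G, g ↦ g^{λ_k}, is injective, and let ρ : G → (ℕ₊ → ℕ₊) be a function with g·λ_k = λ_{ρ(g)(k)} for all g ∈ G and k ≥ 1. Then for all k < ℓ and all g ∈ G: if ρ(g)(k) < ρ(g)(ℓ) then ρ(κ_ℓ(g))(k) = ρ(g)(k) and ρ(κ_k(g))(ℓ+1) = ρ(g)(ℓ) + 1; and if ρ(g)(k) > ρ(g)(ℓ) then ρ(κ_ℓ(g))(k) = ρ(g)(k) + 1 and ρ(κ_k(g))(ℓ+1) = ρ(g)(ℓ). -/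

import Mathlib

/-- The defining relation of the forest monoid: `λ_j * λ_i = λ_i * λ_{j+1}` for `i < j`. -/
def ForestRel : FreeMonoid ℕ+ → FreeMonoid ℕ+ → Prop := fun a b =>
  ∃ i j : ℕ+, i < j ∧ a = FreeMonoid.of j * FreeMonoid.of i ∧
    b = FreeMonoid.of i * FreeMonoid.of (j + 1)

/-- The congruence generated by the forest relations. -/
def ForestCon : Con (FreeMonoid ℕ+) := conGen ForestRel

/-- The forest monoid `𝓕`. -/
abbrev ForestMonoid := ForestCon.Quotient

/-- The generator `λ_k` of the forest monoid. -/
def lam (k : ℕ+) : ForestMonoid := ForestCon.mk' (FreeMonoid.of k)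

/-!
The forest monoid acts on `ℕ` from the right, `λ_k` acting by the increasing injection
`skip k` that jumps over `k`. The product `λ_a λ_b` then acts by `skip b ∘ skip a`, whose range
misses exactly `b` and `skip b a`; comparing these two missing values shows that
`λ_a λ_b = λ_c λ_d` with `c < a` forces `b = c` and `d = a + 1`, i.e. the equation is an instance
of the defining relation. Applying `g` to the relation `λ_l λ_k = λ_k λ_{l+1}` via
`g·(EF) = (g·E)((g^E)·F)` yields exactly such an equation between the `ρ`-values.
-/

namespace ForestMonoid

def skip (k n : ℕ) : ℕ := if n < k then n else n + 1

lemma skip_injective (k : ℕ) : Function.Injective (skip k) := by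
  intro m n h
  simp only [skip] at h
  split_ifs at h <;> omega

lemma range_skip (k : ℕ) : Set.range (skip k) = {k}ᶜ := by
  ext n
  simp only [Set.mem_range, Set.mem_compl_singleton_iff, skip]
  constructor
  · rintro ⟨m, rfl⟩
    split_ifs <;> omega
  · intro hn
    rcases lt_or_gt_of_ne hn with h | h
    · exact ⟨n, if_pos h⟩
    · exact ⟨n - 1, by rw [if_neg (by omega)]; omega⟩

lemma range_skip_comp_skip (a b : ℕ) :
    Set.range (skip b ∘ skip a) = {b, skip b a}ᶜ := by
  rw [Set.range_comp, range_skip, Set.image_compl_eq_range_sdiff_image (skip_injective b),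
    range_skip, Set.image_singleton, Set.insert_eq, Set.compl_union]
  rfl

lemma skip_comp_skip_of_lt {i j : ℕ} (h : i < j) :
    skip i ∘ skip j = skip (j + 1) ∘ skip i := by
  funext n
  simp only [Function.comp_apply, skip]
  split_ifs <;> omega

lemma eq_and_eq_succ_of_skip_comp_skip_eq {a b c d : ℕ}
    (h : skip b ∘ skip a = skip d ∘ skip c) (hca : c < a) : b = c ∧ d = a + 1 := by
  have hmiss : ({b, skip b a} : Set ℕ) = {d, skip d c} := by
    rw [← compl_inj_iff, ← range_skip_comp_skip, ← range_skip_comp_skip, h]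
  rcases Set.pair_eq_pair_iff.mp hmiss with ⟨rfl, hac⟩ | ⟨hb, hd⟩
  · exact absurd (skip_injective b hac) hca.ne'
  · simp only [skip] at hb hd
    split_ifs at hb hd <;> omega

def skipRep : ForestMonoid →* (Function.End ℕ)ᵐᵒᵖ :=
  ForestCon.lift (FreeMonoid.lift fun k => .op (skip k)) <| Con.conGen_le.mpr <| by
    rintro _ _ ⟨i, j, hij, rfl, rfl⟩
    simp only [Con.ker_rel, map_mul, FreeMonoid.lift_eval_of, PNat.add_coe, PNat.one_coe]
    exact congrArg MulOpposite.op (skip_comp_skip_of_lt hij)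

lemma skipRep_lam_mul_lam (a b : ℕ+) :
    skipRep (lam a * lam b) = .op (skip b ∘ skip a) := rfl

lemma lam_mul_lam_succ {i j : ℕ+} (h : i < j) : lam j * lam i = lam i * lam (j + 1) := by
  simp only [lam, ← map_mul]
  exact (Con.eq _).mpr (ConGen.Rel.of _ _ ⟨i, j, h, rfl, rfl⟩)

lemma eq_and_eq_succ_of_lam_mul_lam_eq {a b c d : ℕ+}
    (h : lam a * lam b = lam c * lam d) (hca : c < a) : b = c ∧ d = a + 1 := by
  have hskip := MulOpposite.op_injective <| by
    simpa only [skipRep_lam_mul_lam] using congrArg skipRep h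
  obtain ⟨hbc, hda⟩ := eq_and_eq_succ_of_skip_comp_skip_eq hskip hca
  exact ⟨PNat.coe_injective hbc, PNat.coe_injective hda⟩

end ForestMonoid

theorem cloning_compatibility_general {G : Type*}
    (act : G → ForestMonoid → ForestMonoid) (pw : G → ForestMonoid → G)
    (h8 : ∀ g : G, ∀ E F, act g (E * F) = act g E * act (pw g E) F)
    (ρ : G → ℕ+ → ℕ+)
    (hρ : ∀ (g : G) (k : ℕ+), act g (lam k) = lam (ρ g k)) :
    ∀ (k l : ℕ+), k < l → ∀ g : G,
      (ρ g k < ρ g l →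
        ρ (pw g (lam l)) k = ρ g k ∧ ρ (pw g (lam k)) (l + 1) = ρ g l + 1) ∧
      (ρ g l < ρ g k →
        ρ (pw g (lam l)) k = ρ g k + 1 ∧ ρ (pw g (lam k)) (l + 1) = ρ g l) := by
  intro k l hkl g
  have hrel : lam (ρ g l) * lam (ρ (pw g (lam l)) k)
      = lam (ρ g k) * lam (ρ (pw g (lam k)) (l + 1)) := by
    rw [← hρ, ← hρ, ← hρ, ← hρ, ← h8, ← h8, ForestMonoid.lam_mul_lam_succ hkl]
  exact ⟨fun h => ForestMonoid.eq_and_eq_succ_of_lam_mul_lam_eq hrel h,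
    fun h => (ForestMonoid.eq_and_eq_succ_of_lam_mul_lam_eq hrel.symm h).symm⟩

/-- compatibility: given a Zappa–Szép action pair of a group `G` and the
forest monoid `𝓕` with injective cloning maps `κ_k : g ↦ g^{λ_k}` and a function `ρ`
with `g·λ_k = λ_{ρ(g)(k)}`, the compatibility conditions hold for all `k < ℓ`. -/
theorem cloning_compatibility {G : Type*} [Group G]
    (act : G → ForestMonoid → ForestMonoid) (pw : G → ForestMonoid → G)
    (h1 : ∀ E, act 1 E = E)
    (h2 : ∀ g h : G, ∀ E, act (g * h) E = act g (act h E))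
    (h3 : ∀ g : G, pw g 1 = g)
    (h4 : ∀ g : G, ∀ E F, pw g (E * F) = pw (pw g E) F)
    (h5 : ∀ E, pw (1 : G) E = 1)
    (h6 : ∀ g h : G, ∀ E, pw (g * h) E = pw g (act h E) * pw h E)
    (h7 : ∀ g : G, act g 1 = 1)
    (h8 : ∀ g : G, ∀ E F, act g (E * F) = act g E * act (pw g E) F)
    (hinj : ∀ k : ℕ+, Function.Injective (fun g : G => pw g (lam k)))
    (ρ : G → ℕ+ → ℕ+)
    (hρ : ∀ (g : G) (k : ℕ+), act g (lam k) = lam (ρ g k)) :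
    ∀ (k l : ℕ+), k < l → ∀ g : G,
      (ρ g k < ρ g l →
        ρ (pw g (lam l)) k = ρ g k ∧ ρ (pw g (lam k)) (l + 1) = ρ g l + 1) ∧
      (ρ g l < ρ g k →
        ρ (pw g (lam l)) k = ρ g k + 1 ∧ ρ (pw g (lam k)) (l + 1) = ρ g l) :=
  cloning_compatibility_general act pw h8 ρ hρ
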